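/- (Second partial derivative identity for the self-duality function, one site) Let $\varrho \in [-1,1]$ and fix reals $y_1, y_2 \ge 0$. Define $F : \mathbb{R}^2 \to \mathbb{C}$ by $F(x_1,x_2) = \exp\big(-\sqrt{1-\varrho}(x_1+x_2)(y_1+y_2) + i\sqrt{1+\varrho}(x_1-x_2)(y_1-y_2)\big)$. Then $\frac{1}{2}\partial_{x_1}^2 F + \frac{1}{2}\partial_{x_2}^2 F + \varrho\, \partial_{x_1}\partial_{x_2} F = 4(1-\varrho^2)\, y_1 y_2\, F$. -/

import Mathlib

/-!
Writing `p = -√(1-ρ)(y₁+y₂)` and `q = i√(1+ρ)(y₁-y₂)`, the function is `exp((p+q)x₁ + (p-q)x₂)`,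
on which the operator `½∂₁² + ½∂₂² + ρ∂₁∂₂` acts as multiplication by
`½(p+q)² + ½(p-q)² + ρ(p+q)(p-q) = (1+ρ)p² + (1-ρ)q² = (1-ρ²)((y₁+y₂)² - (y₁-y₂)²) = 4(1-ρ²)y₁y₂`.
-/

open Real

/-- The one-site self-duality function
`F(x₁,x₂) = exp(-√(1-ρ)(x₁+x₂)(y₁+y₂) + i√(1+ρ)(x₁-x₂)(y₁-y₂))`. -/
noncomputable def selfDualF (ρ y1 y2 : ℝ) (x1 x2 : ℝ) : ℂ :=
  Complex.exp (-(Real.sqrt (1 - ρ) : ℂ) * ((x1 : ℂ) + (x2 : ℂ)) * ((y1 : ℂ) + (y2 : ℂ))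
    + Complex.I * (Real.sqrt (1 + ρ) : ℂ) * ((x1 : ℂ) - (x2 : ℂ)) * ((y1 : ℂ) - (y2 : ℂ)))

open Complex

section LinearExponential

variable (a b : ℂ)

lemma hasDerivAt_const_mul_cexp_mul_ofReal_add (c : ℂ) (t : ℝ) :
    HasDerivAt (fun s : ℝ => c * cexp (a * s + b)) (c * a * cexp (a * t + b)) t := by
  have h := (((hasDerivAt_id t).ofReal_comp.const_mul a).add_const b).cexp.const_mul c
  simpa [mul_comm, mul_left_comm, mul_assoc] using h

lemma deriv_cexp_mul_ofReal_add (t : ℝ) :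
    deriv (fun s : ℝ => cexp (a * s + b)) t = a * cexp (a * t + b) := by
  simpa using (hasDerivAt_const_mul_cexp_mul_ofReal_add a b 1 t).deriv

lemma deriv_deriv_cexp_mul_ofReal_add (t : ℝ) :
    deriv (fun u => deriv (fun s : ℝ => cexp (a * s + b)) u) t = a ^ 2 * cexp (a * t + b) := by
  simp only [deriv_cexp_mul_ofReal_add]
  rw [(hasDerivAt_const_mul_cexp_mul_ofReal_add a b a t).deriv, sq]

lemma deriv_deriv_cexp_linear_snd (x1 x2 : ℝ) :
    deriv (fun t => deriv (fun s : ℝ => cexp (a * x1 + b * s)) t) x2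
      = b ^ 2 * cexp (a * x1 + b * x2) := by
  simp only [add_comm (a * (x1 : ℂ))]
  exact deriv_deriv_cexp_mul_ofReal_add b _ x2

lemma deriv_deriv_cexp_linear_mixed (x1 x2 : ℝ) :
    deriv (fun t : ℝ => deriv (fun s : ℝ => cexp (a * s + b * t)) x1) x2
      = a * b * cexp (a * x1 + b * x2) := by
  have inner (t : ℝ) : deriv (fun s : ℝ => cexp (a * s + b * t)) x1
      = a * cexp (b * t + a * x1) := by
    rw [deriv_cexp_mul_ofReal_add, add_comm]
  simp only [inner]
  rw [(hasDerivAt_const_mul_cexp_mul_ofReal_add b (a * x1) a x2).deriv, add_comm]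

end LinearExponential

lemma half_sq_add_half_sq_add_mul_eq {K : Type*} [Field K] [CharZero K]
    (ρ p q y1 y2 : K) (hp : p ^ 2 = (1 - ρ) * (y1 + y2) ^ 2)
    (hq : q ^ 2 = -(1 + ρ) * (y1 - y2) ^ 2) :
    1 / 2 * (p + q) ^ 2 + 1 / 2 * (p - q) ^ 2 + ρ * ((p + q) * (p - q))
      = 4 * (1 - ρ ^ 2) * y1 * y2 := by
  linear_combination (1 + ρ) * hp + (1 - ρ) * hq

theorem stmt12_general (ρ y1 y2 : ℝ) (hρ : ρ ∈ Set.Icc (-1 : ℝ) 1)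
    (x1 x2 : ℝ) :
    (1 / 2 : ℂ) * deriv (fun t => deriv (fun s => selfDualF ρ y1 y2 s x2) t) x1
    + (1 / 2 : ℂ) * deriv (fun t => deriv (fun s => selfDualF ρ y1 y2 x1 s) t) x2
    + (ρ : ℂ) * deriv (fun t => deriv (fun s => selfDualF ρ y1 y2 s t) x1) x2
    = 4 * (1 - (ρ : ℂ) ^ 2) * (y1 : ℂ) * (y2 : ℂ) * selfDualF ρ y1 y2 x1 x2 := by
  set p : ℂ := -(√(1 - ρ) : ℂ) * (y1 + y2)
  set q : ℂ := I * √(1 + ρ) * (y1 - y2)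
  have hF : selfDualF ρ y1 y2 = fun u v : ℝ => cexp ((p + q) * u + (p - q) * v) := by
    ext u v
    simp only [selfDualF, p, q]
    ring_nf
  have hp : p ^ 2 = (1 - ρ) * (y1 + y2) ^ 2 := by
    have : ((√(1 - ρ) : ℝ) : ℂ) ^ 2 = 1 - ρ := by
      exact_mod_cast Real.sq_sqrt (by linarith [hρ.2])
    linear_combination ((y1 : ℂ) + y2) ^ 2 * this
  have hq : q ^ 2 = -(1 + ρ) * (y1 - y2) ^ 2 := by
    have : ((√(1 + ρ) : ℝ) : ℂ) ^ 2 = 1 + ρ := by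
      exact_mod_cast Real.sq_sqrt (by linarith [hρ.1])
    linear_combination I ^ 2 * ((y1 : ℂ) - y2) ^ 2 * this + (1 + ρ) * ((y1 : ℂ) - y2) ^ 2 * I_sq
  simp only [hF, deriv_deriv_cexp_mul_ofReal_add, deriv_deriv_cexp_linear_snd,
    deriv_deriv_cexp_linear_mixed]
  linear_combination cexp ((p + q) * x1 + (p - q) * x2) *
    half_sq_add_half_sq_add_mul_eq (ρ : ℂ) p q y1 y2 hp hq

theorem stmt12 (ρ y1 y2 : ℝ) (hρ : ρ ∈ Set.Icc (-1 : ℝ) 1) (hy1 : 0 ≤ y1) (hy2 : 0 ≤ y2)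
    (x1 x2 : ℝ) :
    (1 / 2 : ℂ) * deriv (fun t => deriv (fun s => selfDualF ρ y1 y2 s x2) t) x1
    + (1 / 2 : ℂ) * deriv (fun t => deriv (fun s => selfDualF ρ y1 y2 x1 s) t) x2
    + (ρ : ℂ) * deriv (fun t => deriv (fun s => selfDualF ρ y1 y2 s t) x1) x2
    = 4 * (1 - (ρ : ℂ) ^ 2) * (y1 : ℂ) * (y2 : ℂ) * selfDualF ρ y1 y2 x1 x2 :=
  stmt12_general ρ y1 y2 hρ x1 x2
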